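/- Let I ⊆ k[x_1,…,x_n] be an ideal, π : k[x_1,…,x_n] → k[x_1,…,x_n]/I the quotient map, M ∈ ℚ^{r×n}, and ℚ^r equipped with the lexicographic order ≻. For a ∈ ℚ^r let V_a be the k-span of the monomials x^α with Mα = a, let F_{⪰a} be the k-span of the monomials with Mα ⪰ a, and let F_{≻a} be the k-span of the monomials with Mα ≻ a. Then for every a ∈ ℚ^r, the k-linear map V_a → π(F_{⪰a})/π(F_{≻a}) sending p to the class of π(p) is surjective with kernel in_M(I) ∩ V_a; hence π(F_{⪰a})/π(F_{≻a}) ≅ V_a/(in_M(I) ∩ V_a) as k-vector spaces. (These isomorphisms assemble into a k-algebra isomorphism between the associated graded algebra of the pushforward filtration on k[x_1,…,x_n]/I and k[x_1,…,x_n]/in_M(I).) -/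

import Mathlib

/-!
Weigh monomials in a linearly ordered abelian group `Γ`. The initial form of `f ≠ 0` is its
homogeneous component of minimal weight `b`, and every monomial of `f - in f` has weight `> b`.

Surjectivity: `f ∈ F_{⪰a}` differs from its weight-`a` component by an element of `F_{≻a}`.
Kernel: if `π p = π h` with `0 ≠ p ∈ V_a` and `h ∈ F_{≻a}`, then `p = in (p - h)` and `p - h ∈ I`.
Conversely, the weight-`a` component of `g * in f` is `g' * in f`, where `g'` is the
weight-`(a - b)` component of `g`; modulo `I` this is `-g' * (f - in f) ∈ F_{≻a}`. Taking
weight-`a` components is linear, so this extends from the generators to all of `in_M(I)`.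
-/

open MvPolynomial

instance finWellFoundedLT {r : ℕ} : WellFoundedLT (Fin r) := Finite.to_wellFoundedLT

/-- The initial form of a polynomial with respect to a comparison `le` on exponent vectors:
the sum of the terms of `f` whose exponent is `le`-minimal in the support of `f`. -/
noncomputable def initialForm {k : Type} [Field k] {n : ℕ}
    (le : (Fin n →₀ ℕ) → (Fin n →₀ ℕ) → Prop)
    (f : MvPolynomial (Fin n) k) : MvPolynomial (Fin n) k :=
  letI := Classical.decPred fun α : Fin n →₀ ℕ => ∀ β ∈ f.support, le α β
  ∑ α ∈ f.support.filter (fun α => ∀ β ∈ f.support, le α β),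
    monomial α (MvPolynomial.coeff α f)

/-- The initial ideal of `I`: the ideal generated by initial forms of nonzero elements of `I`. -/
noncomputable def initialIdeal {k : Type} [Field k] {n : ℕ}
    (le : (Fin n →₀ ℕ) → (Fin n →₀ ℕ) → Prop)
    (I : Ideal (MvPolynomial (Fin n) k)) : Ideal (MvPolynomial (Fin n) k) :=
  Ideal.span {g | ∃ f ∈ I, f ≠ 0 ∧ g = initialForm le f}

/-- The weight `Mα ∈ ℚ^r` of an exponent vector `α` under the weighting matrix `M`. -/
def mwt {n r : ℕ} (M : Matrix (Fin r) (Fin n) ℚ) (α : Fin n →₀ ℕ) : Fin r → ℚ :=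
  fun i => ∑ j, M i j * (α j : ℚ)

/-- Comparison of exponents by `M`-weight, in the lexicographic order on `ℚ^r`. -/
def mLe {n r : ℕ} (M : Matrix (Fin r) (Fin n) ℚ) : (Fin n →₀ ℕ) → (Fin n →₀ ℕ) → Prop :=
  fun α β => toLex (mwt M α) ≤ toLex (mwt M β)

/-- The weight `u·α ∈ ℚ` of an exponent vector under a single weight vector `u ∈ ℚ^n`. -/
def uwt {n : ℕ} (u : Fin n → ℚ) (α : Fin n →₀ ℕ) : ℚ := ∑ j, u j * (α j : ℚ)

/-- Comparison of exponents by `u`-weight. -/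
def uLe {n : ℕ} (u : Fin n → ℚ) : (Fin n →₀ ℕ) → (Fin n →₀ ℕ) → Prop :=
  fun α β => uwt u α ≤ uwt u β

/-- The span of the monomials whose exponents satisfy the predicate `P`. -/
noncomputable def monSpan {k : Type} [Field k] {n : ℕ} (P : (Fin n →₀ ℕ) → Prop) :
    Submodule k (MvPolynomial (Fin n) k) :=
  Submodule.span k ((fun α => MvPolynomial.monomial α (1 : k)) '' {α | P α})

open Finsupp (weight)
open scoped Matrix

theorem mem_monSpan_iff {k : Type} [Field k] {n : ℕ} {P : (Fin n →₀ ℕ) → Prop}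
    {p : MvPolynomial (Fin n) k} : p ∈ monSpan P ↔ ∀ α ∈ p.support, P α := by
  rw [monSpan, ← restrictSupport_eq_span, mem_restrictSupport_iff]
  rfl

theorem toLex_mwt_eq_weight {n r : ℕ} (M : Matrix (Fin r) (Fin n) ℚ) (α : Fin n →₀ ℕ) :
    toLex (mwt M α) = weight (fun j => toLex (Mᵀ j)) α := by
  change toLex (mwt M α) = toLex (α.sum fun j c => c • Mᵀ j)
  congr 1
  funext i
  simp [mwt, Finsupp.sum_fintype, Finset.sum_apply, mul_comm]

def weightLe {σ Γ : Type*} [AddCommMonoid Γ] [LE Γ] (w : σ → Γ) (α β : σ →₀ ℕ) : Prop :=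
  weight w α ≤ weight w β

theorem mLe_eq_weightLe {n r : ℕ} (M : Matrix (Fin r) (Fin n) ℚ) :
    mLe M = weightLe fun j => toLex (Mᵀ j) := by
  funext α β
  simp only [mLe, weightLe, toLex_mwt_eq_weight]

section Graded

attribute [local instance] weightedGradedAlgebra

variable {σ R Γ : Type*} [CommRing R] {w : σ → Γ}

theorem weightedHomogeneousComponent_add_mul [AddCancelCommMonoid Γ] {h : MvPolynomial σ R}
    {j : Γ} (hh : IsWeightedHomogeneous w h j) (i : Γ) (g : MvPolynomial σ R) :
    weightedHomogeneousComponent w (i + j) (g * h) = weightedHomogeneousComponent w i g * h := by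
  classical
  rw [← weightedDecomposition.decompose'_apply, ← weightedDecomposition.decompose'_apply]
  exact DirectSum.coe_decompose_mul_add_of_right_mem (weightedHomogeneousSubmodule R w) hh

theorem lt_weight_of_mem_support_mul [AddCommMonoid Γ] [PartialOrder Γ]
    [IsOrderedCancelAddMonoid Γ] {g q : MvPolynomial σ R} {b c : Γ}
    (hg : IsWeightedHomogeneous w g c) (hq : ∀ α ∈ q.support, b < weight w α) :
    ∀ α ∈ (g * q).support, c + b < weight w α := by
  classical
  intro α hα
  obtain ⟨β, hβ, γ, hγ, rfl⟩ := Finset.mem_add.1 (support_mul g q hα)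
  rw [map_add, hg (mem_support_iff.1 hβ)]
  exact add_lt_add_right (hq γ hγ) c

theorem lt_weight_of_mem_support_sub_weightedHomogeneousComponent [AddCommMonoid Γ]
    [PartialOrder Γ] {f : MvPolynomial σ R} {b : Γ} (hf : ∀ α ∈ f.support, b ≤ weight w α) :
    ∀ α ∈ (f - weightedHomogeneousComponent w b f).support, b < weight w α := by
  classical
  intro α hα
  rw [mem_support_iff, coeff_sub, coeff_weightedHomogeneousComponent] at hα
  split_ifs at hα with hαb
  · exact absurd (sub_self _) hα
  · rw [sub_zero, ← mem_support_iff] at hα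
    exact (hf α hα).lt_of_ne' hαb

end Graded

section InitialForm

variable {k : Type} [Field k] {n : ℕ} {Γ : Type*} {w : Fin n → Γ}

theorem initialForm_zero (le : (Fin n →₀ ℕ) → (Fin n →₀ ℕ) → Prop) :
    initialForm le (0 : MvPolynomial (Fin n) k) = 0 := by
  simp [initialForm]

theorem mem_monSpan_weight_eq_iff [AddCommMonoid Γ] {p : MvPolynomial (Fin n) k} {a : Γ} :
    p ∈ monSpan (fun α => weight w α = a) ↔ IsWeightedHomogeneous w p a := by
  simp [mem_monSpan_iff, IsWeightedHomogeneous]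

variable [AddCommMonoid Γ] [LinearOrder Γ]

theorem initialForm_eq_weightedHomogeneousComponent {f : MvPolynomial (Fin n) k} {b : Γ}
    (hf : ∀ α ∈ f.support, b ≤ weight w α) (hb : ∃ β ∈ f.support, weight w β = b) :
    initialForm (weightLe w) f = weightedHomogeneousComponent w b f := by
  classical
  obtain ⟨β, hβ, rfl⟩ := hb
  ext α
  simp only [initialForm, coeff_sum, coeff_monomial, Finset.sum_ite_eq',
    coeff_weightedHomogeneousComponent]
  by_cases hα : α ∈ f.support
  · refine if_congr ?_ rfl rfl
    simp only [Finset.mem_filter, hα, true_and]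
    exact ⟨fun h => le_antisymm (h β hβ) (hf α hα), fun h γ hγ => h.trans_le (hf γ hγ)⟩
  · simp [notMem_support_iff.1 hα]

theorem exists_initialForm_eq_weightedHomogeneousComponent {f : MvPolynomial (Fin n) k}
    (hf : f ≠ 0) : ∃ b : Γ, (∀ α ∈ f.support, b ≤ weight w α) ∧
      initialForm (weightLe w) f = weightedHomogeneousComponent w b f := by
  obtain ⟨β, hβ, hmin⟩ := f.support.exists_min_image (weight w) (support_nonempty.2 hf)
  exact ⟨_, hmin, initialForm_eq_weightedHomogeneousComponent hmin ⟨β, hβ, rfl⟩⟩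

theorem initialForm_add_of_isWeightedHomogeneous {p q : MvPolynomial (Fin n) k} {b : Γ}
    (hp : IsWeightedHomogeneous w p b) (hp0 : p ≠ 0) (hq : ∀ α ∈ q.support, b < weight w α) :
    initialForm (weightLe w) (p + q) = p := by
  classical
  obtain ⟨β, hβ⟩ := support_nonempty.2 hp0
  have hβb : weight w β = b := hp (mem_support_iff.1 hβ)
  have hβq : coeff β q = 0 := notMem_support_iff.1 fun h => (hq β h).ne' hβb
  have hqb : weightedHomogeneousComponent w b q = 0 :=
    weightedHomogeneousComponent_eq_zero' b q fun α hα => (hq α hα).ne'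
  rw [initialForm_eq_weightedHomogeneousComponent (b := b), map_add,
    hp.weightedHomogeneousComponent_same, hqb, add_zero]
  · intro α hα
    rcases Finset.mem_union.1 (support_add hα) with hα | hα
    · exact (hp (mem_support_iff.1 hα)).ge
    · exact (hq α hα).le
  · refine ⟨β, ?_, hβb⟩
    rwa [mem_support_iff, coeff_add, hβq, add_zero, ← mem_support_iff]

theorem exists_mk_sub_mem_map_of_mem_map (I : Ideal (MvPolynomial (Fin n) k)) (w : Fin n → Γ)
    (a : Γ) :
    ∀ y ∈ Submodule.map (Ideal.Quotient.mkₐ k I).toLinearMap (monSpan fun α => a ≤ weight w α),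
      ∃ p ∈ monSpan (k := k) fun α => weight w α = a,
        Ideal.Quotient.mkₐ k I p - y ∈
          Submodule.map (Ideal.Quotient.mkₐ k I).toLinearMap (monSpan fun α => a < weight w α) := by
  rintro _ ⟨f, hf, rfl⟩
  refine ⟨weightedHomogeneousComponent w a f,
    mem_monSpan_weight_eq_iff.2 (weightedHomogeneousComponent_isWeightedHomogeneous a f),
    -(f - weightedHomogeneousComponent w a f), neg_mem (mem_monSpan_iff.2 ?_), ?_⟩
  · exact lt_weight_of_mem_support_sub_weightedHomogeneousComponent (mem_monSpan_iff.1 hf)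
  · simp only [AlgHom.toLinearMap_apply, map_sub, neg_sub]

theorem mem_initialIdeal_of_mk_mem_map {I : Ideal (MvPolynomial (Fin n) k)} {a : Γ}
    {p : MvPolynomial (Fin n) k} (hp : IsWeightedHomogeneous w p a)
    (h : Ideal.Quotient.mkₐ k I p ∈
      Submodule.map (Ideal.Quotient.mkₐ k I).toLinearMap (monSpan fun α => a < weight w α)) :
    p ∈ initialIdeal (weightLe w) I := by
  obtain ⟨q, hq, hqp⟩ := h
  by_cases hp0 : p = 0
  · rw [hp0]
    exact zero_mem _
  have hin : initialForm (weightLe w) (p - q) = p := by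
    rw [sub_eq_add_neg]
    refine initialForm_add_of_isWeightedHomogeneous hp hp0 fun α hα => ?_
    exact mem_monSpan_iff.1 hq α (by rwa [support_neg] at hα)
  refine Ideal.subset_span ⟨p - q, ?_, ?_, hin.symm⟩
  · rw [AlgHom.toLinearMap_apply, Ideal.Quotient.mkₐ_eq_mk, Ideal.Quotient.eq] at hqp
    rw [← neg_sub]
    exact neg_mem hqp
  · rintro h0
    rw [h0, initialForm_zero] at hin
    exact hp0 hin.symm

end InitialForm

section Quotient

variable {k : Type} [Field k] {n : ℕ} {Γ : Type*} [AddCommGroup Γ] [LinearOrder Γ]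
  [IsOrderedAddMonoid Γ] {I : Ideal (MvPolynomial (Fin n) k)} {w : Fin n → Γ}

theorem mk_weightedHomogeneousComponent_mem_map_of_mem_initialIdeal {x : MvPolynomial (Fin n) k}
    (hx : x ∈ initialIdeal (weightLe w) I) (a : Γ) :
    Ideal.Quotient.mkₐ k I (weightedHomogeneousComponent w a x) ∈
      Submodule.map (Ideal.Quotient.mkₐ k I).toLinearMap (monSpan fun α => a < weight w α) := by
  -- Strengthened to all multiples `g * x` so that the induction over `Ideal.span` goes through.
  suffices ∀ g a, Ideal.Quotient.mkₐ k I (weightedHomogeneousComponent w a (g * x)) ∈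
      Submodule.map (Ideal.Quotient.mkₐ k I).toLinearMap (monSpan fun α => a < weight w α) by
    simpa using this 1 a
  induction hx using Submodule.span_induction with
  | mem y hy =>
    obtain ⟨f, hfI, hf0, rfl⟩ := hy
    obtain ⟨b, hfb, hin⟩ := exists_initialForm_eq_weightedHomogeneousComponent (w := w) hf0
    intro g a
    obtain ⟨i, rfl⟩ : ∃ i : Γ, a = i + b := ⟨a - b, (sub_add_cancel a b).symm⟩
    rw [hin, weightedHomogeneousComponent_add_mul
      (weightedHomogeneousComponent_isWeightedHomogeneous b f)]
    set g' := weightedHomogeneousComponent w i g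
    refine ⟨-(g' * (f - weightedHomogeneousComponent w b f)), neg_mem (mem_monSpan_iff.2 ?_), ?_⟩
    · exact lt_weight_of_mem_support_mul (weightedHomogeneousComponent_isWeightedHomogeneous i g)
        (lt_weight_of_mem_support_sub_weightedHomogeneousComponent hfb)
    · have hf : Ideal.Quotient.mk I f = 0 := Ideal.Quotient.eq_zero_iff_mem.2 hfI
      simp [mul_sub, hf]
  | zero => simp
  | add y z _ _ hy hz =>
    intro g a
    rw [mul_add, map_add, map_add]
    exact add_mem (hy g a) (hz g a)
  | smul c y _ hy =>
    intro g a
    rw [smul_eq_mul, ← mul_assoc]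
    exact hy (g * c) a

theorem mk_mem_map_iff_mem_initialIdeal {a : Γ} {p : MvPolynomial (Fin n) k}
    (hp : IsWeightedHomogeneous w p a) :
    Ideal.Quotient.mkₐ k I p ∈
        Submodule.map (Ideal.Quotient.mkₐ k I).toLinearMap (monSpan fun α => a < weight w α) ↔
      p ∈ initialIdeal (weightLe w) I := by
  refine ⟨mem_initialIdeal_of_mk_mem_map hp, fun h => ?_⟩
  simpa [hp.weightedHomogeneousComponent_same] using
    mk_weightedHomogeneousComponent_mem_map_of_mem_initialIdeal h a

end Quotient

/-- **The associated graded algebra of a weight quasivaluation** (Lemma `lem-gr_v-in_w`).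
For each `a ∈ ℚ^r`, the map sending `p` in the span `V_a` of the monomials of `M`-weight `a`
to the class of `π p` in `π(F_{⪰a})/π(F_{≻a})` is surjective with kernel `in_M(I) ∩ V_a`;
hence `π(F_{⪰a})/π(F_{≻a}) ≅ V_a/(in_M(I) ∩ V_a)`, and these assemble into
`gr(k[x]/I) ≅ k[x]/in_M(I)`. -/
theorem stmt_13 {k : Type} [Field k] {n r : ℕ}
    (I : Ideal (MvPolynomial (Fin n) k)) (M : Matrix (Fin r) (Fin n) ℚ)
    (a : Lex (Fin r → ℚ)) :
    (∀ y ∈ Submodule.map (Ideal.Quotient.mkₐ k I).toLinearMap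
        (monSpan fun α : Fin n →₀ ℕ => a ≤ toLex (mwt M α)),
      ∃ p ∈ monSpan (k := k) fun α : Fin n →₀ ℕ => toLex (mwt M α) = a,
        Ideal.Quotient.mkₐ k I p - y ∈
          Submodule.map (Ideal.Quotient.mkₐ k I).toLinearMap
            (monSpan fun α : Fin n →₀ ℕ => a < toLex (mwt M α))) ∧
    (∀ p ∈ monSpan (k := k) fun α : Fin n →₀ ℕ => toLex (mwt M α) = a,
      (Ideal.Quotient.mkₐ k I p ∈
          Submodule.map (Ideal.Quotient.mkₐ k I).toLinearMap
            (monSpan fun α : Fin n →₀ ℕ => a < toLex (mwt M α)) ↔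
        p ∈ initialIdeal (mLe M) I)) := by
  simp only [toLex_mwt_eq_weight, mLe_eq_weightLe]
  exact ⟨exists_mk_sub_mem_map_of_mem_map I _ a,
    fun p hp => mk_mem_map_iff_mem_initialIdeal (mem_monSpan_weight_eq_iff.1 hp)⟩
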